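/- arXiv:2106.06730 — 3 statements merged into one kernel-verified Lean document; each statement's English description precedes it below -/
import Mathlib

section
/- Suppose Z ⊂ P^4 is a finite set of cardinality at most 2r satisfying CB(4), with Dh_Z(0) = 1, Dh_Z(1) = 4, Dh_Z(2) ≥ r-5, and Dh_Z(5) ≥ 1. Then Dh_Z(3) + Dh_Z(4) + Dh_Z(5) = r, Dh_Z(2) = r-5, and ℓ(Z) = 2r. -/
open MvPolynomial

noncomputable section

/-- Projective n-space over ℂ. -/
abbrev Pn (n : ℕ) := Projectivization ℂ (Fin (n + 1) → ℂ)

/-- Evaluation of a polynomial at a vector, as a linear map. -/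
noncomputable def evalAt {n : ℕ} (v : Fin (n + 1) → ℂ) :
    MvPolynomial (Fin (n + 1)) ℂ →ₗ[ℂ] ℂ :=
  (MvPolynomial.aeval v).toLinearMap

/-- The degree-`j` homogeneous piece of the polynomial ring `R = ℂ[x_0,…,x_n]`. -/
abbrev Rdeg (n j : ℕ) : Submodule ℂ (MvPolynomial (Fin (n + 1)) ℂ) :=
  MvPolynomial.homogeneousSubmodule (Fin (n + 1)) ℂ j

/-- Evaluation of degree-`j` forms at the points of a finite set `Z ⊂ ℙⁿ`
(using chosen representatives; its rank does not depend on the choice). -/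
noncomputable def evalMap {n : ℕ} (Z : Finset (Pn n)) (j : ℕ) :
    (Rdeg n j) →ₗ[ℂ] (Z → ℂ) :=
  (LinearMap.pi fun z : Z => evalAt (z : Pn n).rep).comp (Rdeg n j).subtype

/-- Hilbert function of a finite set of points `Z ⊂ ℙⁿ`. -/
noncomputable def hilb {n : ℕ} (Z : Finset (Pn n)) (j : ℕ) : ℕ :=
  Module.finrank ℂ (LinearMap.range (evalMap Z j))

/-- First difference of the Hilbert function (the `h`-vector entries). -/
noncomputable def Dh {n : ℕ} (Z : Finset (Pn n)) : ℕ → ℕ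
  | 0 => hilb Z 0
  | (j + 1) => hilb Z (j + 1) - hilb Z j

/-- The Cayley–Bacharach property `CB(i)`: every degree-`i` form vanishing on
`Z ∖ {P}` also vanishes at `P`, for every `P ∈ Z`. -/
def CB {n : ℕ} (Z : Finset (Pn n)) (i : ℕ) : Prop :=
  ∀ P ∈ Z, ∀ f ∈ Rdeg n i,
    (∀ Q ∈ Z, Q ≠ P → evalAt (Q : Pn n).rep f = 0) → evalAt P.rep f = 0

/-- The `d`-th power of the linear form corresponding to a point `P ∈ ℙⁿ`,
i.e. the image of `P` under the degree-`d` Veronese map (rep-scaled). -/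
noncomputable def powForm (n d : ℕ) (P : Pn n) : MvPolynomial (Fin (n + 1)) ℂ :=
  (∑ i, P.rep i • MvPolynomial.X i) ^ d

/-- `A` computes (is a decomposition of) the degree-`d` form `T`:
`T` lies in the span of the `d`-th powers of the linear forms given by `A`. -/
def computes (n d : ℕ) (A : Finset (Pn n)) (T : MvPolynomial (Fin (n + 1)) ℂ) : Prop :=
  T ∈ Submodule.span ℂ (powForm n d '' (A : Set (Pn n)))

/-- `A` is a non-redundant decomposition of `T`. -/
def nonRedundant (n d : ℕ) (A : Finset (Pn n)) (T : MvPolynomial (Fin (n + 1)) ℂ) : Prop :=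
  computes n d A T ∧ ∀ A' : Finset (Pn n), A' ⊂ A → ¬ computes n d A' T

/-- The `d`-th Kruskal rank of `A` is `≥ k`: all subsets of `v_d(A)` of
cardinality at most `k` are linearly independent. -/
def kruskalGe (n d : ℕ) (A : Finset (Pn n)) (k : ℕ) : Prop :=
  ∀ S : Finset (Pn n), S ⊆ A → S.card ≤ k →
    LinearIndependent ℂ (fun P : S => powForm n d P.1)

/-- Quadrics through `A`. -/
def quadricsThrough (n : ℕ) (A : Finset (Pn n)) : Set (MvPolynomial (Fin (n + 1)) ℂ) :=
  {f | f ∈ Rdeg n 2 ∧ ∀ P ∈ A, evalAt P.rep f = 0}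

/-- Base locus of the linear system of quadric hypersurfaces through `A`. -/
def baseLocusQ (n : ℕ) (A : Finset (Pn n)) : Set (Pn n) :=
  {Q | ∀ f ∈ quadricsThrough n A, evalAt Q.rep f = 0}

/-- Waring rank of a form `T`. -/
noncomputable def waringRank (n d : ℕ) (T : MvPolynomial (Fin (n + 1)) ℂ) : ℕ :=
  sInf {r | ∃ B : Finset (Pn n), B.card = r ∧ computes n d B T}

/-- Degree-`d` graded piece of the homogeneous ideal of `Z`. -/
noncomputable def idealDeg (n : ℕ) (Z : Finset (Pn n)) (d : ℕ) :
    Submodule ℂ (MvPolynomial (Fin (n + 1)) ℂ) :=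
  Rdeg n d ⊓ ⨅ P ∈ Z, LinearMap.ker (evalAt (P : Pn n).rep)

end

open scoped Classical

/-!
Write `W j ⊆ ℂ^Z` (`evalRange Z j`) for the values on `Z` of the forms of degree `j`, so that
`hilb Z j = dim W j` and `W a * W b ⊆ W (a + b)`. By `CB(4)` no indicator `e_P` lies in `W 4`,
so a generic functional `u` killing `W 4` is nonzero on every `e_P`; then `w ↦ u (w * ·)` embeds
`W 2` into the annihilator of `W 2`, whence `2 hilb Z 2 ≤ |Z|`. With `hilb Z 1 = 5` and the
hypotheses this forces `hilb Z 2 = r` and `|Z| = 2r`. In this extremal case every `e_P` lies in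
`W 5`, for otherwise the same argument with `W 2 ⊔ ℂ e_P` in place of the second `W 2` gains a
dimension. Hence `hilb Z 5 = |Z|`, and the statement is bookkeeping on the `h`-vector.
-/

open Module

section LinearAlgebra

variable {K : Type*} [Field K]

theorem Submodule.exists_dual_forall_eq_zero_forall_ne_zero [Infinite K] {V ι : Type*}
    [AddCommGroup V] [Module K V] [Finite ι] (S : Submodule K V) (v : ι → V)
    (hv : ∀ i, v i ∉ S) : ∃ u : Dual K V, (∀ x ∈ S, u x = 0) ∧ ∀ i, u (v i) ≠ 0 := by
  let p : ι → Submodule K S.dualAnnihilator := fun i =>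
    LinearMap.ker ((Dual.eval K V (v i)).comp S.dualAnnihilator.subtype)
  have hp : ∀ i, p i ≠ ⊤ := by
    intro i hi
    obtain ⟨f, hfv, hSf⟩ := Submodule.exists_le_ker_of_notMem (hv i)
    have hf : f ∈ S.dualAnnihilator := (Submodule.mem_dualAnnihilator f).2 fun x hx => hSf hx
    exact hfv (hi ▸ Submodule.mem_top : (⟨f, hf⟩ : S.dualAnnihilator) ∈ p i)
  obtain ⟨u, hu⟩ : ∃ u : S.dualAnnihilator, ∀ i, u ∉ p i := by
    by_contra! h
    obtain ⟨i, hi⟩ := Subspace.exists_eq_top_of_iUnion_eq_univ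
      (Set.eq_univ_of_forall fun u => Set.mem_iUnion.2 (h u))
    exact hp i hi
  exact ⟨u, (Submodule.mem_dualAnnihilator _).1 u.2, hu⟩

/-- The pairing `(w, t) ↦ u (w * t)` embeds `W` into the annihilator of `T`. -/
theorem finrank_add_finrank_le_of_dual_mul_eq_zero {A : Type*} [Ring A] [Algebra K A]
    [FiniteDimensional K A] (u : Dual K A) {W T : Submodule K A}
    (hWT : ∀ w ∈ W, ∀ t ∈ T, u (w * t) = 0) (hW : ∀ w ∈ W, (∀ x, u (w * x) = 0) → w = 0) :
    finrank K W + finrank K T ≤ finrank K A := by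
  let Θ : W →ₗ[K] T.dualAnnihilator :=
    (((LinearMap.mul K A).compr₂ u).domRestrict W).codRestrict _ fun w =>
      (Submodule.mem_dualAnnihilator _).2 fun t ht => hWT w w.2 t ht
  have hΘ : Function.Injective Θ := by
    refine (injective_iff_map_eq_zero Θ).2 fun w hw => ?_
    exact Subtype.ext (hW w w.2 fun x => LinearMap.congr_fun (congrArg Subtype.val hw) x)
  have := LinearMap.finrank_le_finrank_of_injective hΘ
  have := Subspace.finrank_add_finrank_dualAnnihilator_eq T
  omega

variable {ι : Type*} [DecidableEq ι]

theorem Pi.single_eq_smul_single_one (w : ι → K) (i : ι) :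
    Pi.single i (w i) = w i • Pi.single i 1 := by
  rw [← Pi.single_smul, smul_eq_mul, mul_one]

theorem Pi.mul_single_one (w : ι → K) (i : ι) : w * Pi.single i 1 = w i • Pi.single i 1 := by
  rw [← Pi.single_mul_right, mul_one, Pi.single_eq_smul_single_one]

theorem Pi.apply_eq_zero_of_dual_mul_eq_zero (u : Dual K (ι → K)) {w : ι → K}
    (hw : ∀ x, u (w * x) = 0) {i : ι} (hi : u (Pi.single i 1) ≠ 0) : w i = 0 := by
  have := hw (Pi.single i 1)
  rw [Pi.mul_single_one, map_smul, smul_eq_mul] at this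
  exact (mul_eq_zero.1 this).resolve_right hi

theorem finrank_fun_eq_card {α : Type*} (s : Finset α) : finrank K (s → K) = s.card := by
  simp

end LinearAlgebra

variable {n : ℕ}

theorem exists_linearForm_evalAt_eq (φ : Dual ℂ (Fin (n + 1) → ℂ)) :
    ∃ ℓ ∈ Rdeg n 1, ∀ v, evalAt v ℓ = φ v := by
  refine ⟨∑ i, φ (Pi.single i 1) • X i,
    Submodule.sum_mem _ fun i _ => Submodule.smul_mem _ _ (isHomogeneous_X ℂ i), fun v => ?_⟩
  conv_rhs => rw [← Finset.univ_sum_single v, map_sum]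
  refine (map_sum _ _ _).trans (Finset.sum_congr rfl fun i _ => ?_)
  rw [map_smul, Pi.single_eq_smul_single_one v i, map_smul]
  simp [evalAt, mul_comm]

theorem exists_linearForm_forall_ne_zero (Z : Finset (Pn n)) :
    ∃ ℓ ∈ Rdeg n 1, ∀ z ∈ Z, evalAt z.rep ℓ ≠ 0 := by
  obtain ⟨φ, -, hφ⟩ := Submodule.exists_dual_forall_eq_zero_forall_ne_zero
    (⊥ : Submodule ℂ (Fin (n + 1) → ℂ)) (fun z : Z => z.1.rep) (by simp [Projectivization.rep_nonzero])
  obtain ⟨ℓ, hℓ, hℓφ⟩ := exists_linearForm_evalAt_eq φ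
  exact ⟨ℓ, hℓ, fun z hz => hℓφ _ ▸ hφ ⟨z, hz⟩⟩

theorem exists_linearForm_eq_zero_ne_zero {P Q : Pn n} (h : P ≠ Q) :
    ∃ ℓ ∈ Rdeg n 1, evalAt Q.rep ℓ = 0 ∧ evalAt P.rep ℓ ≠ 0 := by
  have hP : P.rep ∉ ℂ ∙ Q.rep := by
    rintro hmem
    obtain ⟨a, ha⟩ := Submodule.mem_span_singleton.1 hmem
    apply h
    rw [← P.mk_rep, ← Q.mk_rep, Projectivization.mk_eq_mk_iff']
    exact ⟨a, ha⟩
  obtain ⟨φ, hφP, hφQ⟩ := Submodule.exists_le_ker_of_notMem hP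
  obtain ⟨ℓ, hℓ, hℓφ⟩ := exists_linearForm_evalAt_eq φ
  exact ⟨ℓ, hℓ, by rw [hℓφ]; exact hφQ (Submodule.mem_span_singleton_self _), by rwa [hℓφ]⟩

section EvalRange

variable (Z : Finset (Pn n))

noncomputable abbrev evalRange (j : ℕ) : Submodule ℂ (Z → ℂ) := LinearMap.range (evalMap Z j)

variable {Z}

@[simp]
theorem evalMap_apply {j : ℕ} (f : Rdeg n j) (z : Z) : evalMap Z j f z = evalAt z.1.rep f := rfl

theorem evalAt_mem_evalRange {j : ℕ} {ℓ : MvPolynomial (Fin (n + 1)) ℂ} (hℓ : ℓ ∈ Rdeg n j) :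
    (fun z : Z => evalAt z.1.rep ℓ) ∈ evalRange Z j :=
  ⟨⟨ℓ, hℓ⟩, rfl⟩

theorem mul_mem_evalRange {a b : ℕ} {x y : Z → ℂ} (hx : x ∈ evalRange Z a)
    (hy : y ∈ evalRange Z b) : x * y ∈ evalRange Z (a + b) := by
  obtain ⟨f, rfl⟩ := hx
  obtain ⟨g, rfl⟩ := hy
  refine ⟨⟨f.1 * g.1, f.2.mul g.2⟩, funext fun z => ?_⟩
  exact map_mul (aeval (z : Pn n).rep) f.1 g.1

variable (Z) in
theorem exists_mem_evalRange_one_forall_ne_zero : ∃ l ∈ evalRange Z 1, ∀ z, l z ≠ 0 := by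
  obtain ⟨ℓ, hℓ, hℓZ⟩ := exists_linearForm_forall_ne_zero Z
  exact ⟨_, evalAt_mem_evalRange hℓ, fun z => hℓZ z z.2⟩

variable (Z) in
theorem hilb_monotone : Monotone (hilb Z) := by
  refine monotone_nat_of_le_succ fun j => ?_
  obtain ⟨l, hl, hlZ⟩ := exists_mem_evalRange_one_forall_ne_zero Z
  have hinj : Function.Injective (LinearMap.mulLeft ℂ l) := fun x y hxy =>
    funext fun z => mul_left_cancel₀ (hlZ z) (congrFun hxy z)
  have hmap : (evalRange Z j).map (LinearMap.mulLeft ℂ l) ≤ evalRange Z (j + 1) := by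
    rintro _ ⟨x, hx, rfl⟩
    rw [add_comm]
    exact mul_mem_evalRange hl hx
  calc hilb Z j = finrank ℂ ((evalRange Z j).map (LinearMap.mulLeft ℂ l)) :=
        (Submodule.equivMapOfInjective _ hinj _).finrank_eq
    _ ≤ hilb Z (j + 1) := Submodule.finrank_mono hmap

theorem single_mem_evalRange_mono {i j : ℕ} (hij : i ≤ j) {P : Z}
    (hP : Pi.single P 1 ∈ evalRange Z i) : Pi.single P 1 ∈ evalRange Z j := by
  induction j, hij using Nat.le_induction with
  | base => exact hP
  | succ j _ ih =>
    obtain ⟨l, hl, hlZ⟩ := exists_mem_evalRange_one_forall_ne_zero Z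
    have := mul_mem_evalRange hl ih
    rw [Pi.mul_single_one, add_comm] at this
    simpa [hlZ P] using Submodule.smul_mem _ (l P)⁻¹ this

theorem single_notMem_evalRange_of_CB {i : ℕ} (hCB : CB Z i) (P : Z) :
    Pi.single P 1 ∉ evalRange Z i := by
  rintro ⟨f, hf⟩
  have hvan : ∀ Q ∈ Z, Q ≠ P.1 → evalAt Q.rep f.1 = 0 := fun Q hQ hQP => by
    simpa [Pi.single_apply, Subtype.ext_iff, hQP] using congrFun hf ⟨Q, hQ⟩
  simpa [hCB P P.2 f.1 f.2 hvan] using congrFun hf P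

/-- A form of degree `1` through `Q` but not `P` would carry a relation `e_Q - c e_P` in
degree `i` to `e_P` in degree `i + 1`. -/
theorem single_notMem_evalRange_sup_span_single {i : ℕ} (hCB : CB Z i) {P Q : Z}
    (hP : Pi.single P 1 ∉ evalRange Z (i + 1)) (hQP : Q ≠ P) :
    Pi.single Q 1 ∉ evalRange Z i ⊔ ℂ ∙ Pi.single P 1 := by
  intro hQ
  obtain ⟨y, hy, _, hc, hyc⟩ := Submodule.mem_sup.1 hQ
  obtain ⟨c, rfl⟩ := Submodule.mem_span_singleton.1 hc
  have hc : c ≠ 0 := by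
    rintro rfl
    rw [zero_smul, add_zero] at hyc
    exact single_notMem_evalRange_of_CB hCB Q (hyc ▸ hy)
  obtain ⟨ℓ, hℓ, hℓQ, hℓP⟩ :=
    exists_linearForm_eq_zero_ne_zero (Subtype.coe_ne_coe.2 hQP.symm)
  set l : Z → ℂ := fun z => evalAt z.1.rep ℓ
  have hly : l * y = (-(c * l P)) • Pi.single P 1 := by
    rw [eq_sub_of_add_eq hyc, mul_sub, mul_smul_comm, Pi.mul_single_one, Pi.mul_single_one]
    simp [l, hℓQ, smul_smul, neg_smul]
  have hmem := mul_mem_evalRange (evalAt_mem_evalRange hℓ) hy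
  rw [hly, add_comm] at hmem
  have hne : -(c * l P) ≠ 0 := by simp [hc, hℓP, l]
  exact hP (by simpa only [inv_smul_smul₀ hne] using Submodule.smul_mem _ (-(c * l P))⁻¹ hmem)

end EvalRange

section CayleyBacharach

variable {Z : Finset (Pn n)} {a b : ℕ}

/-- A functional vanishing on `evalRange Z (a + b)` but on no `e_P` (it exists by `CB(a + b)`)
pairs `evalRange Z a` injectively against `evalRange Z b`. -/
theorem hilb_add_hilb_le_card_of_CB (hCB : CB Z (a + b)) : hilb Z a + hilb Z b ≤ Z.card := by
  obtain ⟨u, hu, huP⟩ := Submodule.exists_dual_forall_eq_zero_forall_ne_zero (evalRange Z (a + b))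
    (fun P : Z => Pi.single P 1) (single_notMem_evalRange_of_CB hCB)
  rw [← finrank_fun_eq_card (K := ℂ)]
  refine finrank_add_finrank_le_of_dual_mul_eq_zero u
    (fun w hw t ht => hu _ (mul_mem_evalRange hw ht)) fun w _ hwu => ?_
  exact funext fun P => Pi.apply_eq_zero_of_dual_mul_eq_zero u hwu (huP P)

/-- In the extremal case of `hilb_add_hilb_le_card_of_CB`, a point `e_P` missing from degree
`a + b + 1` would let the same pairing run against `evalRange Z b ⊔ ℂ ∙ e_P`, one dimension
too many. -/
theorem single_mem_evalRange_of_CB (hCB : CB Z (a + b))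
    (hZ : hilb Z a + hilb Z b = Z.card) (P : Z) : Pi.single P 1 ∈ evalRange Z (a + b + 1) := by
  by_contra hP
  have hPa : Pi.single P 1 ∉ evalRange Z a := fun h => hP (single_mem_evalRange_mono (by omega) h)
  have hPb : Pi.single P 1 ∉ evalRange Z b := fun h => hP (single_mem_evalRange_mono (by omega) h)
  obtain ⟨u, hu, huQ⟩ := Submodule.exists_dual_forall_eq_zero_forall_ne_zero
    (evalRange Z (a + b) ⊔ ℂ ∙ Pi.single P 1) (fun Q : {Q : Z // Q ≠ P} => Pi.single Q.1 1)
    fun Q => single_notMem_evalRange_sup_span_single hCB hP Q.2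
  have hWT : ∀ w ∈ evalRange Z a, ∀ t ∈ evalRange Z b ⊔ ℂ ∙ Pi.single P 1, u (w * t) = 0 := by
    intro w hw t ht
    obtain ⟨y, hy, _, hc, rfl⟩ := Submodule.mem_sup.1 ht
    obtain ⟨c, rfl⟩ := Submodule.mem_span_singleton.1 hc
    rw [mul_add, mul_smul_comm, Pi.mul_single_one, smul_smul]
    exact hu _ (Submodule.add_mem_sup (mul_mem_evalRange hw hy)
      (Submodule.smul_mem _ _ (Submodule.mem_span_singleton_self _)))
  have hW : ∀ w ∈ evalRange Z a, (∀ x, u (w * x) = 0) → w = 0 := by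
    intro w hw hwu
    have hw_eq : w = w P • Pi.single P 1 := by
      rw [← Pi.single_eq_smul_single_one]
      funext Q
      by_cases hQ : Q = P
      · subst hQ; simp
      · rw [Pi.single_eq_of_ne hQ, Pi.apply_eq_zero_of_dual_mul_eq_zero u hwu (huQ ⟨Q, hQ⟩)]
    by_contra hw0
    have hwP : w P ≠ 0 := fun h => hw0 (by rw [hw_eq, h, zero_smul])
    rw [hw_eq] at hw
    exact hPa (by simpa only [inv_smul_smul₀ hwP] using Submodule.smul_mem _ (w P)⁻¹ hw)
  have hlt : hilb Z b < finrank ℂ ↥(evalRange Z b ⊔ ℂ ∙ Pi.single P 1) :=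
    Submodule.finrank_lt_finrank_of_lt <| SetLike.lt_iff_le_and_exists.2
      ⟨le_sup_left, _, Submodule.mem_sup_right (Submodule.mem_span_singleton_self _), hPb⟩
  have := finrank_add_finrank_le_of_dual_mul_eq_zero u hWT hW
  rw [finrank_fun_eq_card] at this
  change hilb Z a + _ ≤ _ at this
  omega

theorem hilb_eq_card_of_CB (hCB : CB Z (a + b)) (hZ : hilb Z a + hilb Z b = Z.card) :
    hilb Z (a + b + 1) = Z.card := by
  have htop : evalRange Z (a + b + 1) = ⊤ := by
    rw [eq_top_iff, ← (Pi.basisFun ℂ Z).span_eq, Submodule.span_le]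
    rintro _ ⟨P, rfl⟩
    rw [Pi.basisFun_apply]
    exact single_mem_evalRange_of_CB hCB hZ P
  change finrank ℂ (evalRange Z (a + b + 1)) = Z.card
  rw [htop, finrank_top, finrank_fun_eq_card]

end CayleyBacharach

theorem stmt2_general (r : ℕ) (Z : Finset (Pn 4)) (hcard : Z.card ≤ 2 * r) (hCB : CB Z 4)
    (h0 : Dh Z 0 = 1) (h1 : Dh Z 1 = 4) (h2 : r - 5 ≤ Dh Z 2) :
    Dh Z 3 + Dh Z 4 + Dh Z 5 = r ∧ Dh Z 2 = r - 5 ∧ Z.card = 2 * r := by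
  have h12 := hilb_monotone Z (by norm_num : 1 ≤ 2)
  have h23 := hilb_monotone Z (by norm_num : 2 ≤ 3)
  have h34 := hilb_monotone Z (by norm_num : 3 ≤ 4)
  have h45 := hilb_monotone Z (by norm_num : 4 ≤ 5)
  have hle : hilb Z 2 + hilb Z 2 ≤ Z.card := hilb_add_hilb_le_card_of_CB hCB
  obtain ⟨hD0, hD1, hD2, hD3, hD4, hD5⟩ : Dh Z 0 = hilb Z 0 ∧ Dh Z 1 = hilb Z 1 - hilb Z 0 ∧
      Dh Z 2 = hilb Z 2 - hilb Z 1 ∧ Dh Z 3 = hilb Z 3 - hilb Z 2 ∧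
      Dh Z 4 = hilb Z 4 - hilb Z 3 ∧ Dh Z 5 = hilb Z 5 - hilb Z 4 :=
    ⟨rfl, rfl, rfl, rfl, rfl, rfl⟩
  have h5 : hilb Z 5 = Z.card := hilb_eq_card_of_CB (a := 2) (b := 2) hCB (by omega)
  omega

/-- Numerical step: `Z ⊂ ℙ⁴` of cardinality `≤ 2r` satisfying `CB(4)`
with `Dh_Z(0)=1`, `Dh_Z(1)=4`, `Dh_Z(2) ≥ r-5`, `Dh_Z(5) ≥ 1` forces
`Dh_Z(3)+Dh_Z(4)+Dh_Z(5) = r`, `Dh_Z(2) = r-5` and `ℓ(Z) = 2r`. -/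
theorem stmt2 (r : ℕ) (Z : Finset (Pn 4)) (hcard : Z.card ≤ 2 * r) (hCB : CB Z 4)
    (h0 : Dh Z 0 = 1) (h1 : Dh Z 1 = 4) (h2 : r - 5 ≤ Dh Z 2) (h5 : 1 ≤ Dh Z 5) :
    Dh Z 3 + Dh Z 4 + Dh Z 5 = r ∧ Dh Z 2 = r - 5 ∧ Z.card = 2 * r :=
  stmt2_general r Z hcard hCB h0 h1 h2
end

section
/- Let A ⊂ P^4 be a set of 13 points satisfying: k_1(A) = 5, k_2(A) = 13, and every subset of length ≤ 11 has finite quadric base locus of length ≤ 16. Then the span of v_4(A) contains no form of rank ≤ 11 outside the spans of images of subsets of A of length 11. -/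
open MvPolynomial

open scoped Classical

/-!
Let `A₀ ⊆ A` be minimal with `T = ∑_{P ∈ A₀} c_P L_P⁴`, so every `c_P ≠ 0`. The second partials
of `T` are `∂ᵢ∂ⱼ T = ∑ 12 c_P P_i P_j L_P²`. Since the squares `L_P²` (`P ∈ A₀`) are linearly
independent (`k₂(A) = 13`), so are the rows `(P_i P_j)_{ij}`, and solving this linear system puts
every `L_P²` in the span of the second partials of `T`. Any decomposition `T = ∑_{Q ∈ B} m_Q L_Q⁴`
puts those partials in the span of the `L_Q²`, hence `|A₀| ≤ |B| ≤ 11`, and `A₀` can be enlarged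
inside `A` to `11` points.
-/

namespace MvPolynomial

variable {R σ : Type*} [CommRing R] [Fintype σ]

theorem sum_smul_X_sq (v : σ → R) :
    (∑ k, v k • X k : MvPolynomial σ R) ^ 2 =
      ∑ p : σ × σ, (v p.1 * v p.2) • (X p.1 * X p.2 : MvPolynomial σ R) := by
  simp only [sq, Finset.sum_mul_sum, Fintype.sum_prod_type, smul_mul_smul_comm]

variable [DecidableEq σ]

theorem pderiv_sum_smul_X (v : σ → R) (a : σ) :
    pderiv a (∑ k, v k • X k : MvPolynomial σ R) = C (v a) := by
  simp [smul_eq_C_mul, Pi.single_apply]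

theorem pderiv_pderiv_sum_smul_X_pow (v : σ → R) (i j : σ) (d : ℕ) :
    pderiv i (pderiv j ((∑ k, v k • X k : MvPolynomial σ R) ^ (d + 2))) =
      (((d + 2) * (d + 1) : ℕ) * v i * v j) • (∑ k, v k • X k) ^ d := by
  rw [Derivation.leibniz_pow, pderiv_sum_smul_X, map_nsmul, smul_eq_mul, Derivation.leibniz,
    pderiv_C, Derivation.leibniz_pow, pderiv_sum_smul_X]
  simp only [smul_eq_C_mul, nsmul_eq_mul, map_mul, map_natCast]
  push_cast
  ring

end MvPolynomial

theorem Matrix.mulVec_surjective_of_linearIndependent_row {K m n : Type*} [Field K] [Fintype m]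
    [Fintype n] {M : Matrix m n K} (h : LinearIndependent K M.row) :
    Function.Surjective M.mulVec := by
  rw [← Matrix.coe_mulVecLin, ← LinearMap.range_eq_top]
  apply Submodule.eq_top_of_finrank_eq
  rw [Module.finrank_fintype_fun_eq_card, ← h.rank_matrix]
  rfl

section Catalecticant

variable {n : ℕ}

theorem computes.mono {d : ℕ} {S S' : Finset (Pn n)} {T : MvPolynomial (Fin (n + 1)) ℂ}
    (hT : computes n d S T) (h : S ⊆ S') : computes n d S' T :=
  Submodule.span_mono (Set.image_mono (Finset.coe_subset.mpr h)) hT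

theorem exists_nonRedundant_subset {d : ℕ} {A : Finset (Pn n)} {T : MvPolynomial (Fin (n + 1)) ℂ}
    (hT : computes n d A T) : ∃ A₀ ⊆ A, nonRedundant n d A₀ T := by
  obtain ⟨A₀, hA₀, hmin⟩ := exists_minimal_le_of_wellFoundedLT (computes n d · T) A hT
  exact ⟨A₀, hA₀, hmin.prop, fun _ hlt => hmin.not_prop_of_lt hlt⟩

theorem nonRedundant.exists_eq_sum {d : ℕ} {A : Finset (Pn n)} {T : MvPolynomial (Fin (n + 1)) ℂ}
    (hT : nonRedundant n d A T) :
    ∃ c : Pn n → ℂ, (∀ P ∈ A, c P ≠ 0) ∧ ∑ P ∈ A, c P • powForm n d P = T := by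
  obtain ⟨c, hc⟩ := (Submodule.mem_span_image_finset_iff_exists_fun' ℂ).mp hT.1
  refine ⟨c, fun P hP hcP => hT.2 (A.erase P) (Finset.erase_ssubset hP) ?_, hc⟩
  rw [computes, Submodule.mem_span_image_finset_iff_exists_fun' ℂ]
  exact ⟨c, by rw [← hc, ← Finset.add_sum_erase _ _ hP, hcP, zero_smul, zero_add]⟩

theorem pderiv_pderiv_powForm (d : ℕ) (P : Pn n) (i j : Fin (n + 1)) :
    pderiv i (pderiv j (powForm n (d + 2) P)) =
      (((d + 2) * (d + 1) : ℕ) * P.rep i * P.rep j : ℂ) • powForm n d P :=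
  pderiv_pderiv_sum_smul_X_pow _ i j d

noncomputable def secondPartials (T : MvPolynomial (Fin (n + 1)) ℂ) :
    Submodule ℂ (MvPolynomial (Fin (n + 1)) ℂ) :=
  Submodule.span ℂ (Set.range fun ij : Fin (n + 1) × Fin (n + 1) => pderiv ij.1 (pderiv ij.2 T))

theorem secondPartials_le_span_powForm {d : ℕ} {B : Finset (Pn n)}
    {T : MvPolynomial (Fin (n + 1)) ℂ} (hT : computes n (d + 2) B T) :
    secondPartials T ≤ Submodule.span ℂ (powForm n d '' B) := by
  rw [secondPartials, Submodule.span_le]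
  rintro _ ⟨⟨i, j⟩, rfl⟩
  refine Submodule.span_le.mpr ?_ <| Submodule.apply_mem_span_image_of_mem_span
    ((pderiv i).toLinearMap ∘ₗ (pderiv j).toLinearMap) hT
  rintro _ ⟨_, ⟨P, hP, rfl⟩, rfl⟩
  rw [LinearMap.comp_apply, Derivation.coeFn_coe, Derivation.coeFn_coe,
    pderiv_pderiv_powForm]
  exact Submodule.smul_mem _ _ (Submodule.subset_span ⟨P, hP, rfl⟩)

theorem linearIndependent_rep_mul_rep {A : Finset (Pn n)}
    (hA : LinearIndependent ℂ fun P : A => powForm n 2 P.1) :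
    LinearIndependent ℂ fun (P : A) (ij : Fin (n + 1) × Fin (n + 1)) =>
      P.1.rep ij.1 * P.1.rep ij.2 := by
  refine LinearIndependent.of_comp
    (Fintype.linearCombination ℂ fun ij => (X ij.1 * X ij.2 : MvPolynomial (Fin (n + 1)) ℂ)) ?_
  convert hA using 2 with P
  simp only [Function.comp_apply, Fintype.linearCombination_apply, powForm, sum_smul_X_sq]

theorem powForm_two_mem_secondPartials {A : Finset (Pn n)} {T : MvPolynomial (Fin (n + 1)) ℂ}
    (hA : LinearIndependent ℂ fun P : A => powForm n 2 P.1) (hT : nonRedundant n 4 A T)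
    {P : Pn n} (hP : P ∈ A) : powForm n 2 P ∈ secondPartials T := by
  obtain ⟨c, hc, hcT⟩ := hT.exists_eq_sum
  obtain ⟨w, hw⟩ := Matrix.mulVec_surjective_of_linearIndependent_row
    (linearIndependent_rep_mul_rep hA) (Pi.single ⟨P, hP⟩ 1)
  have hw' (Q : A) : ∑ ij, Q.1.rep ij.1 * Q.1.rep ij.2 * w ij =
      Pi.single (M := fun _ : A => ℂ) ⟨P, hP⟩ 1 Q :=
    congrFun hw Q
  have hcomb : ∑ ij, w ij • pderiv ij.1 (pderiv ij.2 T) = (12 * c P) • powForm n 2 P := by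
    rw [← hcT]
    calc _ = ∑ Q : A, (12 * c Q * ∑ ij, Q.1.rep ij.1 * Q.1.rep ij.2 * w ij) • powForm n 2 Q := by
          simp only [← Finset.sum_coe_sort A, map_sum, Derivation.map_smul, pderiv_pderiv_powForm 2,
            Finset.smul_sum, smul_smul, Finset.mul_sum, Finset.sum_smul]
          rw [Finset.sum_comm]
          refine Fintype.sum_congr _ _ fun Q => Fintype.sum_congr _ _ fun ij => ?_
          congr 1
          push_cast
          ring
      _ = (12 * c P) • powForm n 2 P := by
          simp only [hw']
          rw [Fintype.sum_eq_single ⟨P, hP⟩ fun Q hQ => by simp [hQ]]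
          simp
  have hmem := Submodule.sum_smul_mem (secondPartials T) w (t := Finset.univ)
    fun ij _ => Submodule.subset_span ⟨ij, rfl⟩
  rw [hcomb] at hmem
  exact (Submodule.smul_mem_iff _ (mul_ne_zero (by norm_num) (hc P hP))).mp hmem

theorem nonRedundant.card_le_of_computes {A B : Finset (Pn n)}
    {T : MvPolynomial (Fin (n + 1)) ℂ} (hA : LinearIndependent ℂ fun P : A => powForm n 2 P.1)
    (hT : nonRedundant n 4 A T) (hB : computes n 4 B T) : A.card ≤ B.card := by
  have hle : Submodule.span ℂ (Set.range fun P : A => powForm n 2 P.1) ≤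
      Submodule.span ℂ (powForm n 2 '' B) := Submodule.span_le.mpr <| by
    rintro _ ⟨⟨P, hP⟩, rfl⟩
    exact secondPartials_le_span_powForm hB (powForm_two_mem_secondPartials hA hT hP)
  rw [← Finset.coe_image] at hle
  calc A.card = Module.finrank ℂ (Submodule.span ℂ (Set.range fun P : A => powForm n 2 P.1)) := by
        rw [finrank_span_eq_card hA, Fintype.card_coe]
    _ ≤ (B.image (powForm n 2)).card :=
        (Submodule.finrank_mono hle).trans (finrank_span_finset_le_card _)
    _ ≤ B.card := Finset.card_image_le

end Catalecticant

theorem stmt11_general (A : Finset (Pn 4)) (hA : A.card = 13)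
    (hk2 : kruskalGe 4 2 A 13) :
    ∀ T : MvPolynomial (Fin 5) ℂ, T.IsHomogeneous 4 → computes 4 4 A T →
      (∃ B : Finset (Pn 4), B.card ≤ 11 ∧ computes 4 4 B T) →
      ∃ A' : Finset (Pn 4), A' ⊆ A ∧ A'.card = 11 ∧ computes 4 4 A' T := by
  rintro T - hAT ⟨B, hB, hBT⟩
  obtain ⟨A₀, hA₀A, hA₀⟩ := exists_nonRedundant_subset hAT
  have hA₀B : A₀.card ≤ B.card :=
    hA₀.card_le_of_computes (hk2 A₀ hA₀A (hA ▸ Finset.card_le_card hA₀A)) hBT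
  obtain ⟨A', hA₀A', hA'A, hA'⟩ :=
    Finset.exists_subsuperset_card_eq hA₀A (hA₀B.trans hB) (by omega)
  exact ⟨A', hA'A, hA', hA₀.1.mono hA₀A'⟩

/-- For `A` of `13` points with `k₁(A)=5`, `k₂(A)=13` and every
subset of length `≤ 11` having finite quadric base locus of length `≤ 16`: any form
of rank `≤ 11` in the span of `v₄(A)` lies in the span of `v₄` of an `11`-point
subset of `A`. -/
theorem stmt11 (A : Finset (Pn 4)) (hA : A.card = 13)
    (hk1 : kruskalGe 4 1 A 5) (hk2 : kruskalGe 4 2 A 13)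
    (hiv : ∀ A' : Finset (Pn 4), A' ⊆ A → A'.card ≤ 11 →
      (baseLocusQ 4 A').Finite ∧ (baseLocusQ 4 A').ncard ≤ 16) :
    ∀ T : MvPolynomial (Fin 5) ℂ, T.IsHomogeneous 4 → computes 4 4 A T →
      (∃ B : Finset (Pn 4), B.card ≤ 11 ∧ computes 4 4 B T) →
      ∃ A' : Finset (Pn 4), A' ⊆ A ∧ A'.card = 11 ∧ computes 4 4 A' T :=
  stmt11_general A hA hk2
end

section
/- Suppose Z ⊂ P^4 is a finite set of cardinality at most 24 satisfying CB(5), with Dh_Z(0) = 1, Dh_Z(1) = 4, and Dh_Z(2) ≥ 8. Then no such Z exists; i.e., the conditions are contradictory. -/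
open MvPolynomial

open scoped Classical

/-!
Write `V j ⊆ ℂ^Z` for the space of values of degree-`j` forms on `Z`, so that `hilb Z j = dim V j`
and `V i * V j ⊆ V (i + j)`. The property `CB(i + j)` says that no indicator `δ_z` lies in
`V (i + j)`, so a generic functional `f` vanishing on `V (i + j)` has `f δ_z ≠ 0` for every `z`.
Then `(u, v) ↦ f (u * v)` is a nondegenerate pairing on `ℂ^Z` for which `V i` and `V j` are
orthogonal, whence `hilb Z i + hilb Z j ≤ |Z|`. Multiplication by a linear form vanishing at no
point of `Z` shows that `hilb Z` is nondecreasing. With `i = 2`, `j = 3` and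
`hilb Z 2 ≥ 1 + 4 + 8` this gives `26 ≤ hilb Z 2 + hilb Z 3 ≤ 24`.
-/

open Module

section PointwiseDuality

variable {K α : Type*} [Field K] [Fintype α]

theorem finrank_add_finrank_le_card_of_apply_mul_eq_zero [DecidableEq α]
    {U V : Submodule K (α → K)} (f : Dual K (α → K)) (hf : ∀ a, f (Pi.single a 1) ≠ 0)
    (hUV : ∀ u ∈ U, ∀ v ∈ V, f (u * v) = 0) :
    finrank K U + finrank K V ≤ Fintype.card α := by
  set T := (LinearMap.mul K (α → K)).compr₂ f
  have hT : ∀ u, T u = 0 → u = 0 := by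
    intro u hu
    funext a
    have hsingle : u * Pi.single a 1 = u a • Pi.single a 1 := by
      rw [← Pi.single_mul_right, ← smul_eq_mul, Pi.single_smul]
    have hua : f (u * Pi.single a 1) = 0 := LinearMap.congr_fun hu (Pi.single a 1)
    rw [hsingle, map_smul, smul_eq_mul] at hua
    exact (mul_eq_zero.mp hua).resolve_right (hf a)
  have hTU : ∀ u ∈ U, T u ∈ V.dualAnnihilator := fun u hu =>
    (Submodule.mem_dualAnnihilator _).mpr (hUV u hu)
  have hinj : Function.Injective (T.restrict hTU) := fun u v huv =>
    Subtype.ext ((injective_iff_map_eq_zero T).mpr hT (congrArg Subtype.val huv))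
  have hU : finrank K U ≤ finrank K V.dualAnnihilator :=
    LinearMap.finrank_le_finrank_of_injective hinj
  have hdual := Subspace.finrank_add_finrank_dualAnnihilator_eq V
  rw [finrank_fintype_fun_eq_card] at hdual
  omega

theorem exists_mem_dualAnnihilator_forall_apply_single_ne_zero [DecidableEq α] [Infinite K]
    {W : Submodule K (α → K)} (hW : ∀ a, Pi.single a 1 ∉ W) :
    ∃ f ∈ W.dualAnnihilator, ∀ a, f (Pi.single a 1) ≠ 0 := by
  refine Dual.exists_forall_mem_ne_zero_of_forall_exists _
    (fun a => Dual.eval K (α → K) (Pi.single a 1)) fun a => ?_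
  have hex :=
    (Subspace.forall_mem_dualAnnihilator_apply_eq_zero_iff W (Pi.single a 1)).not.mpr (hW a)
  push Not at hex
  exact hex

theorem finrank_add_finrank_le_card_of_mul_mem [DecidableEq α] [Infinite K]
    {U V W : Submodule K (α → K)} (hW : ∀ a, Pi.single a 1 ∉ W)
    (hUV : ∀ u ∈ U, ∀ v ∈ V, u * v ∈ W) :
    finrank K U + finrank K V ≤ Fintype.card α := by
  obtain ⟨f, hfW, hf⟩ := exists_mem_dualAnnihilator_forall_apply_single_ne_zero hW
  exact finrank_add_finrank_le_card_of_apply_mul_eq_zero f hf fun u hu v hv =>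
    (Submodule.mem_dualAnnihilator f).mp hfW _ (hUV u hu v hv)

theorem finrank_le_finrank_of_mul_mem {U V : Submodule K (α → K)} {ℓ : α → K}
    (hℓ : ∀ a, ℓ a ≠ 0) (hUV : ∀ u ∈ U, ℓ * u ∈ V) : finrank K U ≤ finrank K V := by
  have hinj : Function.Injective ((LinearMap.mulLeft K ℓ).restrict hUV) := by
    intro u v huv
    exact Subtype.ext <| funext fun a =>
      mul_left_cancel₀ (hℓ a) (congrFun (congrArg Subtype.val huv) a)
  exact LinearMap.finrank_le_finrank_of_injective hinj

end PointwiseDuality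

section HilbertFunction

variable {n : ℕ} (Z : Finset (Pn n))

theorem mul_mem_range_evalMap {i j : ℕ} {u v : Z → ℂ} (hu : u ∈ LinearMap.range (evalMap Z i))
    (hv : v ∈ LinearMap.range (evalMap Z j)) : u * v ∈ LinearMap.range (evalMap Z (i + j)) := by
  obtain ⟨f, rfl⟩ := hu
  obtain ⟨g, rfl⟩ := hv
  refine ⟨⟨f * g, f.2.mul g.2⟩, funext fun z => ?_⟩
  exact map_mul (MvPolynomial.aeval (z : Pn n).rep) f.1 g.1

theorem exists_mem_range_evalMap_one_forall_ne_zero :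
    ∃ ℓ ∈ LinearMap.range (evalMap Z 1), ∀ z, ℓ z ≠ 0 := by
  refine Dual.exists_forall_mem_ne_zero_of_forall_exists _
    (fun z : Z => (LinearMap.proj z : (Z → ℂ) →ₗ[ℂ] ℂ)) fun z => ?_
  obtain ⟨i, hi⟩ := Function.ne_iff.mp (z : Pn n).rep_nonzero
  refine ⟨evalMap Z 1 ⟨X i, isHomogeneous_X ℂ i⟩, LinearMap.mem_range_self _ _, ?_⟩
  simpa [evalMap, evalAt] using hi

theorem hilb_le_hilb_succ (j : ℕ) : hilb Z j ≤ hilb Z (j + 1) := by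
  obtain ⟨ℓ, hℓ, hℓ0⟩ := exists_mem_range_evalMap_one_forall_ne_zero Z
  refine finrank_le_finrank_of_mul_mem hℓ0 fun u hu => ?_
  rw [add_comm j 1]
  exact mul_mem_range_evalMap Z hℓ hu

theorem single_notMem_range_evalMap {i : ℕ} (hCB : CB Z i) (z : Z) :
    Pi.single z 1 ∉ LinearMap.range (evalMap Z i) := by
  rintro ⟨f, hf⟩
  have hval : ∀ w : Z, evalAt (w : Pn n).rep f = (Pi.single z 1 : Z → ℂ) w :=
    fun w => congrFun hf w
  have hz : evalAt (z : Pn n).rep f = 0 := hCB z z.2 f f.2 fun Q hQ hQz => by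
    rw [hval ⟨Q, hQ⟩, Pi.single_eq_of_ne]
    exact fun h => hQz (congrArg Subtype.val h)
  rw [hval, Pi.single_eq_same] at hz
  exact one_ne_zero hz

theorem hilb_add_hilb_le_card {i j : ℕ} (hCB : CB Z (i + j)) : hilb Z i + hilb Z j ≤ Z.card := by
  rw [← Fintype.card_coe Z]
  exact finrank_add_finrank_le_card_of_mul_mem (single_notMem_range_evalMap Z hCB)
    fun u hu v hv => mul_mem_range_evalMap Z hu hv

end HilbertFunction

/-- No finite set `Z ⊂ ℙ⁴` of cardinality `≤ 24` satisfies `CB(5)`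
together with `Dh_Z(0)=1`, `Dh_Z(1)=4` and `Dh_Z(2) ≥ 8`. -/
theorem stmt12 (Z : Finset (Pn 4)) (hcard : Z.card ≤ 24) (hCB : CB Z 5)
    (h0 : Dh Z 0 = 1) (h1 : Dh Z 1 = 4) (h2 : 8 ≤ Dh Z 2) : False := by
  have hduality : hilb Z 2 + hilb Z 3 ≤ Z.card := hilb_add_hilb_le_card Z hCB
  have hmono : hilb Z 2 ≤ hilb Z 3 := hilb_le_hilb_succ Z 2
  simp only [Dh, Nat.reduceAdd] at h0 h1 h2
  omega
end
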